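/- Let σ : [0,1] → ℝ be measurable with 0 < s1 ≤ σ(u) ≤ s2 for all u ∈ [0,1], let T(t) = ∫_0^t σ²(u) du, ρ = T(1), τ = T(t), and let c1 < c2 be real numbers. For x ∈ ℝ and t ∈ [0,1) set z1 = (c1 - x)/√(ρ - τ), z2 = (c2 - x)/√(ρ - τ), and I(x,t) = (Φ'(z1) - Φ'(z2))² / ( √(ρ - τ) · (Φ(z2) - Φ(z1)) · (Φ(-z2) + Φ(z1)) ). Then the integrals ∫_{-∞}^{∞} I(x,t) dx are uniformly bounded in t ∈ [0,1): there exists a constant C such that ∫_ℝ I(x,t) dx ≤ C for every t ∈ [0,1). -/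

import Mathlib

/-!
Write `g z = Φ' z * exp (-|z|)` and `h z = Φ' z * exp |z|`, so that `Φ' z ^ 2 = g z * h z`.
Since `Φ' (z + s) ≥ exp (-1/2) * g z` for `|s| ≤ 1`, the standard normal law gives mass at
least `η * exp (-1/2) * g z` to every interval of length `η ≤ 1` containing `z`. Hence for
`z₁ + η ≤ z₂` both factors `D = Φ z₂ - Φ z₁` and `E = Φ (-z₂) + Φ z₁` of the denominator
dominate multiples of `g z₁` and of `g z₂`, and as `D + E = 1` one of them is at least `1/2`.
This bounds the integrand by a constant times `(h z₁ + h z₂) / √(ρ - τ)`, whose integral in `x`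
is a constant times `∫ h`. The gap `z₂ - z₁ = (c₂ - c₁) / √(ρ - τ)` is at least `(c₂ - c₁) / s₂`
because `ρ - τ ≤ s₂²`, so the constant does not depend on `t`.
-/

open MeasureTheory Real Set Filter

noncomputable def Φ' (z : ℝ) : ℝ := (Real.sqrt (2 * Real.pi))⁻¹ * Real.exp (-z ^ 2 / 2)

noncomputable def Φ (z : ℝ) : ℝ := ∫ u in Set.Iic z, Φ' u

/-- `I(x,t)` of the paper: with `T(t) = ∫_0^t σ²`, `ρ = T(1)`, `τ = T(t)`,
`r = √(ρ - τ)`, `z1 = (c1 - x)/r`, `z2 = (c2 - x)/r`. -/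
noncomputable def Ifun (σ : ℝ → ℝ) (c1 c2 t x : ℝ) : ℝ :=
  let r := Real.sqrt ((∫ u in (0:ℝ)..1, (σ u) ^ 2) - ∫ u in (0:ℝ)..t, (σ u) ^ 2)
  let z1 := (c1 - x) / r
  let z2 := (c2 - x) / r
  (Φ' z1 - Φ' z2) ^ 2 / (r * (Φ z2 - Φ z1) * (Φ (-z2) + Φ z1))

open ProbabilityTheory

lemma Φ'_eq_gaussianPDFReal : Φ' = gaussianPDFReal 0 1 := by
  ext z; simp [Φ', gaussianPDFReal]

lemma Φ'_pos (z : ℝ) : 0 < Φ' z := by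
  rw [Φ'_eq_gaussianPDFReal]; exact gaussianPDFReal_pos _ _ _ one_ne_zero

lemma integrable_Φ' : Integrable Φ' := by
  rw [Φ'_eq_gaussianPDFReal]; exact integrable_gaussianPDFReal _ _

lemma integral_Φ' : ∫ z, Φ' z = 1 := by
  rw [Φ'_eq_gaussianPDFReal]; exact integral_gaussianPDFReal_eq_one _ one_ne_zero

@[fun_prop]
lemma continuous_Φ' : Continuous Φ' := by
  unfold Φ'; fun_prop

lemma Φ'_neg (z : ℝ) : Φ' (-z) = Φ' z := by simp [Φ']

lemma Φ'_add (z s : ℝ) : Φ' (z + s) = Φ' z * exp (-(z * s) - s ^ 2 / 2) := by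
  rw [Φ', Φ', mul_assoc, ← exp_add]; ring_nf

lemma exp_neg_half_mul_le_Φ'_add {s : ℝ} (hs : |s| ≤ 1) (z : ℝ) :
    exp (-1 / 2) * (Φ' z * exp (-|z|)) ≤ Φ' (z + s) := by
  rw [Φ'_add, mul_left_comm, ← exp_add]
  gcongr
  · exact (Φ'_pos z).le
  · have h1 : z * s ≤ |z| := by
      calc z * s ≤ |z * s| := le_abs_self _
        _ = |z| * |s| := abs_mul _ _
        _ ≤ |z| := mul_le_of_le_one_right (abs_nonneg z) hs
    have h2 : s ^ 2 ≤ 1 := by nlinarith [sq_abs s, abs_nonneg s]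
    linarith

lemma Φ'_mul_exp_abs_le (z : ℝ) :
    Φ' z * exp |z| ≤ exp (1 / 2) * (Φ' (z - 1) + Φ' (z + 1)) := by
  have hexp : exp |z| ≤ exp z + exp (-z) := by
    rcases abs_cases z with ⟨h, -⟩ | ⟨h, -⟩ <;> rw [h] <;> linarith [exp_pos z, exp_pos (-z)]
  have hsplit : exp (1 / 2) * (Φ' (z - 1) + Φ' (z + 1)) = Φ' z * (exp z + exp (-z)) := by
    rw [sub_eq_add_neg, Φ'_add, Φ'_add, mul_add, ← mul_assoc, ← mul_assoc]
    simp only [mul_comm (exp (1 / 2)), mul_assoc, ← exp_add]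
    ring_nf
  rw [hsplit]
  exact mul_le_mul_of_nonneg_left hexp (Φ'_pos z).le

lemma integrable_Φ'_mul_exp_abs : Integrable fun z => Φ' z * exp |z| := by
  refine Integrable.mono' (((integrable_Φ'.comp_sub_right 1).add
    (integrable_Φ'.comp_add_right 1)).const_mul (exp (1 / 2))) (by fun_prop) ?_
  refine ae_of_all _ fun z => ?_
  rw [norm_of_nonneg (mul_pos (Φ'_pos z) (exp_pos _)).le]
  exact Φ'_mul_exp_abs_le z

lemma Φ_nonneg (z : ℝ) : 0 ≤ Φ z :=
  setIntegral_nonneg measurableSet_Iic fun u _ => (Φ'_pos u).le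

lemma Φ_sub (a b : ℝ) : Φ b - Φ a = ∫ u in a..b, Φ' u :=
  intervalIntegral.integral_Iic_sub_Iic integrable_Φ'.integrableOn integrable_Φ'.integrableOn

lemma mul_le_Φ_sub {a b m : ℝ} (h : a ≤ b) (hm : ∀ u ∈ Icc a b, m ≤ Φ' u) :
    (b - a) * m ≤ Φ b - Φ a := by
  rw [Φ_sub]
  simpa using intervalIntegral.integral_mono_on h intervalIntegrable_const
    integrable_Φ'.intervalIntegrable hm

lemma Φ_mono : Monotone Φ := fun a b h => by
  simpa using mul_le_Φ_sub h fun u _ => (Φ'_pos u).le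

lemma Φ_neg_add_Φ (z : ℝ) : Φ (-z) + Φ z = 1 := by
  have hneg : Φ (-z) = ∫ u in Ioi z, Φ' u := by
    rw [Φ, ← integral_comp_neg_Ioi]
    simp only [Φ'_neg]
  rw [hneg, add_comm, Φ, intervalIntegral.integral_Iic_add_Ioi integrable_Φ'.integrableOn
    integrable_Φ'.integrableOn, integral_Φ']

lemma mul_le_Φ_sub_of_mem {a b z : ℝ} (hz : z ∈ Icc a b) (hab : b - a ≤ 1) :
    (b - a) * (exp (-1 / 2) * (Φ' z * exp (-|z|))) ≤ Φ b - Φ a := by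
  refine mul_le_Φ_sub (hz.1.trans hz.2) fun u hu => ?_
  have hdist : |u - z| ≤ 1 := by
    rw [abs_le]; constructor <;> linarith [hz.1, hz.2, hu.1, hu.2]
  simpa using exp_neg_half_mul_le_Φ'_add hdist z

lemma exp_neg_half_mul_le_Φ (z : ℝ) : exp (-1 / 2) * (Φ' z * exp (-|z|)) ≤ Φ z := by
  have h := mul_le_Φ_sub_of_mem (a := z - 1) (b := z) ⟨by linarith, le_rfl⟩ (by linarith)
  rw [sub_sub_cancel, one_mul] at h
  linarith [Φ_nonneg (z - 1)]

lemma mul_le_Φ_sub_mul_Φ_add {η z1 z2 z : ℝ} (hη : 0 ≤ η) (hη1 : η ≤ 1) (h12 : z1 + η ≤ z2)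
    (hz : z = z1 ∨ z = z2) :
    η / 2 * (exp (-1 / 2) * (Φ' z * exp (-|z|))) ≤ (Φ z2 - Φ z1) * (Φ (-z2) + Φ z1) := by
  have hD : η * (exp (-1 / 2) * (Φ' z * exp (-|z|))) ≤ Φ z2 - Φ z1 := by
    rcases hz with rfl | rfl
    · have := mul_le_Φ_sub_of_mem (a := z) (b := z + η) ⟨le_rfl, by linarith⟩ (by linarith)
      rw [add_sub_cancel_left] at this
      linarith [Φ_mono h12]
    · have := mul_le_Φ_sub_of_mem (a := z - η) (b := z) ⟨by linarith, le_rfl⟩ (by linarith)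
      rw [sub_sub_cancel] at this
      linarith [Φ_mono (show z1 ≤ z - η by linarith)]
  have hE : exp (-1 / 2) * (Φ' z * exp (-|z|)) ≤ Φ (-z2) + Φ z1 := by
    rcases hz with rfl | rfl
    · linarith [exp_neg_half_mul_le_Φ z, Φ_nonneg (-z2)]
    · have := exp_neg_half_mul_le_Φ (-z)
      rw [Φ'_neg, abs_neg] at this
      linarith [Φ_nonneg z1]
  have hg : 0 ≤ exp (-1 / 2) * (Φ' z * exp (-|z|)) := by
    have := Φ'_pos z
    positivity
  have hsum : (Φ z2 - Φ z1) + (Φ (-z2) + Φ z1) = 1 := by linarith [Φ_neg_add_Φ z2]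
  generalize exp (-1 / 2) * (Φ' z * exp (-|z|)) = g at hD hE hg ⊢
  rcases le_total (1 / 2) (Φ z2 - Φ z1) with hhalf | hhalf
  · nlinarith [mul_le_mul hhalf hE hg (by linarith)]
  · nlinarith [mul_le_mul hD (show 1 / 2 ≤ Φ (-z2) + Φ z1 by linarith) (by norm_num)
      (by linarith [mul_nonneg hη hg])]

lemma sq_sub_Φ'_le {η z1 z2 : ℝ} (hη : 0 < η) (hη1 : η ≤ 1) (h12 : z1 + η ≤ z2) :
    (Φ' z1 - Φ' z2) ^ 2 ≤ 2 * exp (1 / 2) / η * (Φ' z1 * exp |z1| + Φ' z2 * exp |z2|) *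
      ((Φ z2 - Φ z1) * (Φ (-z2) + Φ z1)) := by
  have hsq : ∀ z, z = z1 ∨ z = z2 → Φ' z ^ 2 ≤
      2 * exp (1 / 2) / η * (Φ' z * exp |z|) * ((Φ z2 - Φ z1) * (Φ (-z2) + Φ z1)) := by
    intro z hz
    have hsmall :
        Φ' z * exp (-|z|) ≤ 2 * exp (1 / 2) / η * ((Φ z2 - Φ z1) * (Φ (-z2) + Φ z1)) :=
      calc Φ' z * exp (-|z|)
          = 2 * exp (1 / 2) / η * (η / 2 * (exp (-1 / 2) * (Φ' z * exp (-|z|)))) := by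
            field_simp
            rw [mul_assoc, ← exp_add]
            norm_num
        _ ≤ _ := mul_le_mul_of_nonneg_left (mul_le_Φ_sub_mul_Φ_add hη.le hη1 h12 hz)
            (by positivity)
    calc Φ' z ^ 2 = (Φ' z * exp |z|) * (Φ' z * exp (-|z|)) := by
          rw [mul_mul_mul_comm, ← exp_add, add_neg_cancel, exp_zero, mul_one, sq]
      _ ≤ (Φ' z * exp |z|) *
            (2 * exp (1 / 2) / η * ((Φ z2 - Φ z1) * (Φ (-z2) + Φ z1))) :=
          mul_le_mul_of_nonneg_left hsmall (mul_pos (Φ'_pos z) (exp_pos _)).le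
      _ = _ := by ring
  nlinarith [hsq z1 (.inl rfl), hsq z2 (.inr rfl), mul_pos (Φ'_pos z1) (Φ'_pos z2)]

/-- `Ifun σ c1 c2 t` is definitionally `IOfScale (√(ρ - τ)) c1 c2`. -/
noncomputable def IOfScale (r c1 c2 x : ℝ) : ℝ :=
  (Φ' ((c1 - x) / r) - Φ' ((c2 - x) / r)) ^ 2 /
    (r * (Φ ((c2 - x) / r) - Φ ((c1 - x) / r)) * (Φ (-((c2 - x) / r)) + Φ ((c1 - x) / r)))

lemma measurable_IOfScale (r c1 c2 : ℝ) : Measurable (IOfScale r c1 c2) := by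
  have := Φ_mono.measurable
  unfold IOfScale
  fun_prop

lemma IOfScale_nonneg_and_le {r η c1 c2 : ℝ} (hr : 0 < r) (hη : 0 < η) (hη1 : η ≤ 1)
    (hc : η * r ≤ c2 - c1) (x : ℝ) :
    0 ≤ IOfScale r c1 c2 x ∧ IOfScale r c1 c2 x ≤ 2 * exp (1 / 2) / η *
      (Φ' ((c1 - x) / r) * exp |(c1 - x) / r| +
        Φ' ((c2 - x) / r) * exp |(c2 - x) / r|) / r := by
  set z1 := (c1 - x) / r
  set z2 := (c2 - x) / r
  have h12 : z1 + η ≤ z2 := by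
    have : z2 - z1 = (c2 - c1) / r := by simp only [z1, z2]; ring
    linarith [(le_div_iff₀ hr).2 hc]
  have hDE : 0 < (Φ z2 - Φ z1) * (Φ (-z2) + Φ z1) := by
    refine lt_of_lt_of_le ?_ (mul_le_Φ_sub_mul_Φ_add hη.le hη1 h12 (.inl rfl))
    have := Φ'_pos z1
    positivity
  unfold IOfScale
  rw [mul_assoc]
  refine ⟨by positivity, ?_⟩
  rw [div_le_div_iff₀ (mul_pos hr hDE) hr]
  nlinarith [sq_sub_Φ'_le hη hη1 h12]

lemma integral_comp_sub_div (f : ℝ → ℝ) (c : ℝ) {r : ℝ} (hr : 0 < r) :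
    ∫ x, f ((c - x) / r) = r * ∫ z, f z := by
  rw [integral_sub_left_eq_self (fun y => f (y / r)), Measure.integral_comp_div, smul_eq_mul,
    abs_of_pos hr]

lemma integrable_comp_sub_div {f : ℝ → ℝ} (hf : Integrable f) (c : ℝ) {r : ℝ} (hr : 0 < r) :
    Integrable fun x => f ((c - x) / r) :=
  (hf.comp_div hr.ne').comp_sub_left c

lemma integrable_IOfScale_and_integral_le {r η c1 c2 : ℝ} (hr : 0 < r) (hη : 0 < η)
    (hη1 : η ≤ 1) (hc : η * r ≤ c2 - c1) :
    Integrable (IOfScale r c1 c2) ∧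
      ∫ x, IOfScale r c1 c2 x ≤ 2 * (2 * exp (1 / 2) / η) * ∫ z, Φ' z * exp |z| := by
  set h := fun z => Φ' z * exp |z|
  set bound := fun x => 2 * exp (1 / 2) / η * (h ((c1 - x) / r) + h ((c2 - x) / r)) / r
  have hbound : Integrable bound :=
    (((integrable_comp_sub_div integrable_Φ'_mul_exp_abs c1 hr).add
      (integrable_comp_sub_div integrable_Φ'_mul_exp_abs c2 hr)).const_mul _).div_const r
  have hle x := IOfScale_nonneg_and_le hr hη hη1 hc x
  have hint : Integrable (IOfScale r c1 c2) :=
    hbound.mono' (measurable_IOfScale r c1 c2).aestronglyMeasurable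
      (ae_of_all _ fun x => by rw [norm_of_nonneg (hle x).1]; exact (hle x).2)
  refine ⟨hint, (integral_mono hint hbound fun x => (hle x).2).trans_eq ?_⟩
  simp only [bound, integral_div, integral_const_mul]
  rw [integral_add (integrable_comp_sub_div integrable_Φ'_mul_exp_abs c1 hr)
    (integrable_comp_sub_div integrable_Φ'_mul_exp_abs c2 hr), integral_comp_sub_div h c1 hr,
    integral_comp_sub_div h c2 hr]
  field_simp
  ring

lemma integral_sub_integral_mem_Icc {f : ℝ → ℝ} (hf : Measurable f) {a b t : ℝ}
    (hab : ∀ u ∈ Icc (0 : ℝ) 1, a ≤ f u ∧ f u ≤ b) (ht : t ∈ Icc (0 : ℝ) 1) :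
    (∫ u in (0 : ℝ)..1, f u) - (∫ u in (0 : ℝ)..t, f u) ∈ Icc (a * (1 - t)) (b * (1 - t)) := by
  have hint : IntegrableOn f (Icc 0 1) := by
    refine IntegrableOn.of_bound (by simp) hf.aestronglyMeasurable (max |a| |b|) ?_
    refine (ae_restrict_iff' measurableSet_Icc).2 (ae_of_all _ fun u hu => ?_)
    rw [Real.norm_eq_abs, abs_le]
    constructor <;> linarith [(hab u hu).1, (hab u hu).2, le_max_left |a| |b|,
      le_max_right |a| |b|, neg_abs_le a, le_abs_self b]
  have hii : ∀ x y, x ∈ Icc (0 : ℝ) 1 → y ∈ Icc (0 : ℝ) 1 → IntervalIntegrable f volume x y :=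
    fun x y hx hy => (hint.mono_set (uIcc_subset_Icc hx hy)).intervalIntegrable
  have h0 : (0 : ℝ) ∈ Icc (0 : ℝ) 1 := ⟨le_rfl, zero_le_one⟩
  have h1 : (1 : ℝ) ∈ Icc (0 : ℝ) 1 := ⟨zero_le_one, le_rfl⟩
  rw [intervalIntegral.integral_interval_sub_left (hii 0 1 h0 h1) (hii 0 t h0 ht)]
  have hab' : ∀ u ∈ Icc t 1, a ≤ f u ∧ f u ≤ b := fun u hu => hab u ⟨ht.1.trans hu.1, hu.2⟩
  constructor
  · simpa [mul_comm] using intervalIntegral.integral_mono_on ht.2 intervalIntegrable_const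
      (hii t 1 ht h1) fun u hu => (hab' u hu).1
  · simpa [mul_comm] using intervalIntegral.integral_mono_on ht.2 (hii t 1 ht h1)
      intervalIntegrable_const fun u hu => (hab' u hu).2

/-- the integrals `∫_ℝ I(x,t) dx` are uniformly bounded for `t ∈ [0,1)`. -/
theorem uniform_bound_I (σ : ℝ → ℝ) (hσ : Measurable σ) (s1 s2 : ℝ) (hs1 : 0 < s1)
    (hσbd : ∀ u ∈ Set.Icc (0:ℝ) 1, s1 ≤ σ u ∧ σ u ≤ s2)
    (c1 c2 : ℝ) (hc : c1 < c2) :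
    ∃ C : ℝ, ∀ t ∈ Set.Ico (0:ℝ) 1,
      Integrable (fun x : ℝ => Ifun σ c1 c2 t x) volume ∧
      (∫ x : ℝ, Ifun σ c1 c2 t x) ≤ C := by
  obtain ⟨hs1σ, hσs2⟩ := hσbd 0 ⟨le_rfl, zero_le_one⟩
  have hs2 : 0 < s2 := hs1.trans_le (hs1σ.trans hσs2)
  set η := min ((c2 - c1) / s2) 1
  have hη : 0 < η := lt_min (div_pos (sub_pos.2 hc) hs2) one_pos
  refine ⟨2 * (2 * exp (1 / 2) / η) * ∫ z, Φ' z * exp |z|, fun t ht => ?_⟩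
  obtain ⟨hlo, hhi⟩ := integral_sub_integral_mem_Icc (hσ.pow_const 2) (a := s1 ^ 2) (b := s2 ^ 2)
    (fun u hu => ⟨pow_le_pow_left₀ hs1.le (hσbd u hu).1 2,
      pow_le_pow_left₀ (hs1.le.trans (hσbd u hu).1) (hσbd u hu).2 2⟩) (Ico_subset_Icc_self ht)
  set r := √((∫ u in (0 : ℝ)..1, σ u ^ 2) - ∫ u in (0 : ℝ)..t, σ u ^ 2)
  have hr : 0 < r := sqrt_pos.2 ((mul_pos (pow_pos hs1 2) (sub_pos.2 ht.2)).trans_le hlo)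
  have hrs2 : r ≤ s2 :=
    (sqrt_le_left hs2.le).2 (hhi.trans (mul_le_of_le_one_right (sq_nonneg s2) (by linarith [ht.1])))
  have hηr : η * r ≤ c2 - c1 :=
    (mul_le_mul (min_le_left _ _) hrs2 hr.le (div_pos (sub_pos.2 hc) hs2).le).trans_eq
      (div_mul_cancel₀ _ hs2.ne')
  exact integrable_IOfScale_and_integral_le hr hη (min_le_right _ _) hηr
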